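/- Fix positive integers n, q, m satisfying 4 ≤ m ≤ q ≤ n. Then (m/(2n))·log(q/n) − (1/n)·Σ_{j=n−q+1}^{n−q+m} μ_{n,j} ≥ (m−1)²/(4nq), where μ_{n,j} := E[(1/2)·log((1/n)·χ²_{n−j+1})]. -/

import Mathlib

/-!
Jensen's inequality for the concave `log` (in tangent-line form at the mean) together with
`E[χ²_k] = k` gives `μ_{n,j} ≤ ½ log((n-j+1)/n)`; the log-moment of a gamma law is finite because
`|log x| ≤ (x^ε + x^(-ε)) / ε`. Summing over `j`, i.e. over `k = q - i` for `i < m`, and using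
`log (1 - i/q) ≤ -i/q` leaves `m(m-1)/(4nq) ≥ (m-1)²/(4nq)`.
-/

open MeasureTheory ProbabilityTheory Real

/-- The chi-squared distribution with `m` degrees of freedom. -/
noncomputable def chiSqMeasure (m : ℕ) : Measure ℝ :=
  ProbabilityTheory.gammaMeasure (m / 2 : ℝ) (1 / 2)

/-- `μ_{n,j} = E[(1/2) log((1/n) χ²_{n-j+1})]`. -/
noncomputable def muNK (n j : ℕ) : ℝ :=
  ∫ x, (1 / 2 : ℝ) * Real.log (x / n) ∂(chiSqMeasure (n - j + 1))

open Set Filter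

lemma Real.abs_log_le_rpow_add_rpow_neg_div {x ε : ℝ} (hx : 0 < x) (hε : 0 < ε) :
    |log x| ≤ (x ^ ε + x ^ (-ε)) / ε := by
  have hup : log x ≤ x ^ ε / ε := log_le_rpow_div hx.le hε
  have hdown : -log x ≤ x ^ (-ε) / ε := by
    rw [← log_inv, rpow_neg hx.le, ← inv_rpow hx.le]
    exact log_le_rpow_div (inv_nonneg.2 hx.le) hε
  have hpos := div_pos (rpow_pos_of_pos hx ε) hε
  have hneg := div_pos (rpow_pos_of_pos hx (-ε)) hε
  rw [abs_le, add_div]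
  constructor <;> linarith

lemma MeasureTheory.integral_log_le_log_integral {α : Type*} [MeasurableSpace α]
    {μ : Measure α} [IsProbabilityMeasure μ] {f : α → ℝ} (hf_pos : ∀ᵐ x ∂μ, 0 < f x)
    (hf : Integrable f μ) (hlog : Integrable (fun x => log (f x)) μ) :
    ∫ x, log (f x) ∂μ ≤ log (∫ x, f x ∂μ) := by
  set c := ∫ x, f x ∂μ
  have hc : 0 < c := by
    refine (integral_pos_iff_support_of_nonneg_ae (hf_pos.mono fun _ hx => hx.le) hf).2 ?_
    refine pos_iff_ne_zero.2 fun h => ?_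
    obtain ⟨x, hx, hx0⟩ := (hf_pos.and (measure_eq_zero_iff_ae_notMem.1 h)).exists
    exact hx0 hx.ne'
  have htangent : ∀ᵐ x ∂μ, log (f x) ≤ log c + f x / c - 1 := by
    filter_upwards [hf_pos] with x hx
    have h := log_le_sub_one_of_pos (div_pos hx hc)
    rw [log_div hx.ne' hc.ne'] at h
    linarith
  have hint : Integrable (fun x => log c + f x / c) μ := (integrable_const _).add (hf.div_const c)
  calc ∫ x, log (f x) ∂μ ≤ ∫ x, (log c + f x / c - 1) ∂μ :=
        integral_mono_ae hlog (hint.sub (integrable_const _)) htangent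
    _ = log c := by
        rw [integral_sub hint (integrable_const _),
          integral_add (integrable_const _) (hf.div_const c), integral_div]
        simp [c, hc.ne']

namespace ProbabilityTheory

variable {a r : ℝ}

lemma measurable_gammaPDF (a r : ℝ) : Measurable (gammaPDF a r) :=
  (measurable_gammaPDFReal a r).ennreal_ofReal

lemma gammaMeasure_eq_withDensity_restrict_Ioi (a r : ℝ) :
    gammaMeasure a r = (volume.restrict (Ioi 0)).withDensity (gammaPDF a r) := by
  rw [← withDensity_indicator measurableSet_Ioi, gammaMeasure]
  refine withDensity_congr_ae ?_
  filter_upwards [Measure.ae_ne volume (0 : ℝ)] with x hx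
  rcases hx.lt_or_gt with hneg | hpos
  · rw [gammaPDF_of_neg hneg, indicator_of_notMem (notMem_Ioi.2 hneg.le)]
  · rw [indicator_of_mem (mem_Ioi.2 hpos)]

lemma ae_pos_gammaMeasure (a r : ℝ) : ∀ᵐ x ∂gammaMeasure a r, 0 < x := by
  rw [gammaMeasure_eq_withDensity_restrict_Ioi]
  exact (withDensity_absolutelyContinuous _ _).ae_le (ae_restrict_mem measurableSet_Ioi)

lemma integral_gammaMeasure (ha : 0 < a) (hr : 0 < r) (g : ℝ → ℝ) :
    ∫ x, g x ∂gammaMeasure a r = ∫ x in Ioi 0, gammaPDFReal a r x * g x := by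
  rw [gammaMeasure_eq_withDensity_restrict_Ioi, integral_withDensity_eq_integral_toReal_smul
    (measurable_gammaPDF a r) (ae_of_all _ fun _ => ENNReal.ofReal_lt_top)]
  simp only [gammaPDF, ENNReal.toReal_ofReal (gammaPDFReal_nonneg ha hr _), smul_eq_mul]

lemma integrable_gammaMeasure_iff (ha : 0 < a) (hr : 0 < r) {g : ℝ → ℝ} :
    Integrable g (gammaMeasure a r) ↔
      IntegrableOn (fun x => gammaPDFReal a r x * g x) (Ioi 0) := by
  rw [gammaMeasure_eq_withDensity_restrict_Ioi, integrable_withDensity_iff_integrable_smul'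
    (measurable_gammaPDF a r) (ae_of_all _ fun _ => ENNReal.ofReal_lt_top)]
  simp only [gammaPDF, ENNReal.toReal_ofReal (gammaPDFReal_nonneg ha hr _), smul_eq_mul]
  rfl

lemma gammaPDFReal_mul_rpow {s x : ℝ} (hr : 0 < r) (has : 0 < a + s) (hx : 0 < x) :
    gammaPDFReal a r x * x ^ s =
      Gamma (a + s) / (Gamma a * r ^ s) * gammaPDFReal (a + s) r x := by
  have hΓ := (Gamma_pos_of_pos has).ne'
  simp only [gammaPDFReal, if_pos hx.le]
  rw [rpow_add hr, show a + s - 1 = a - 1 + s by ring, rpow_add hx]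
  field_simp

lemma integrable_rpow_gammaMeasure {s : ℝ} (ha : 0 < a) (hr : 0 < r) (has : 0 < a + s) :
    Integrable (fun x => x ^ s) (gammaMeasure a r) := by
  have := isProbabilityMeasure_gammaMeasure has hr
  have hpdf := (integrable_gammaMeasure_iff has hr).1 (integrable_const (1 : ℝ))
  rw [integrable_gammaMeasure_iff ha hr]
  refine IntegrableOn.congr_fun (hpdf.const_mul (Gamma (a + s) / (Gamma a * r ^ s)))
    (fun x hx => ?_) measurableSet_Ioi
  rw [gammaPDFReal_mul_rpow hr has hx, mul_one]

lemma integral_rpow_gammaMeasure {s : ℝ} (ha : 0 < a) (hr : 0 < r) (has : 0 < a + s) :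
    ∫ x, x ^ s ∂gammaMeasure a r = Gamma (a + s) / (Gamma a * r ^ s) := by
  have := isProbabilityMeasure_gammaMeasure has hr
  have hpdf := integral_gammaMeasure has hr (fun _ => 1)
  simp only [integral_const, probReal_univ, smul_eq_mul, mul_one] at hpdf
  rw [integral_gammaMeasure ha hr, setIntegral_congr_fun measurableSet_Ioi
    (fun x hx => gammaPDFReal_mul_rpow hr has hx), integral_const_mul, ← hpdf, mul_one]

lemma integrable_id_gammaMeasure (ha : 0 < a) (hr : 0 < r) :
    Integrable (fun x => x) (gammaMeasure a r) := by
  simpa using integrable_rpow_gammaMeasure (s := 1) ha hr (by linarith)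

lemma integral_id_gammaMeasure (ha : 0 < a) (hr : 0 < r) :
    ∫ x, x ∂gammaMeasure a r = a / r := by
  have h := integral_rpow_gammaMeasure (s := 1) ha hr (by linarith)
  simp only [rpow_one, Gamma_add_one ha.ne'] at h
  rw [h]
  field_simp [(Gamma_pos_of_pos ha).ne']

lemma integrable_log_gammaMeasure (ha : 0 < a) (hr : 0 < r) :
    Integrable log (gammaMeasure a r) := by
  have hε : 0 < a / 2 := by linarith
  refine Integrable.mono'
    (((integrable_rpow_gammaMeasure (s := a / 2) ha hr (by linarith)).add
      (integrable_rpow_gammaMeasure (s := -(a / 2)) ha hr (by linarith))).div_const (a / 2))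
    measurable_log.aestronglyMeasurable ?_
  filter_upwards [ae_pos_gammaMeasure a r] with x hx
  exact abs_log_le_rpow_add_rpow_neg_div hx hε

lemma integral_log_div_gammaMeasure_le (ha : 0 < a) (hr : 0 < r) {c : ℝ} (hc : 0 < c) :
    ∫ x, log (x / c) ∂gammaMeasure a r ≤ log (a / r / c) := by
  have := isProbabilityMeasure_gammaMeasure ha hr
  have hlog : Integrable (fun x => log (x / c)) (gammaMeasure a r) := by
    refine ((integrable_log_gammaMeasure ha hr).sub (integrable_const (log c))).congr ?_
    filter_upwards [ae_pos_gammaMeasure a r] with x hx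
    rw [Pi.sub_apply, log_div hx.ne' hc.ne']
  have hpos : ∀ᵐ x ∂gammaMeasure a r, 0 < x / c := by
    filter_upwards [ae_pos_gammaMeasure a r] with x hx
    positivity
  refine (integral_log_le_log_integral hpos ((integrable_id_gammaMeasure ha hr).div_const c)
    hlog).trans_eq ?_
  rw [integral_div, integral_id_gammaMeasure ha hr]

end ProbabilityTheory

lemma muNK_le (n j : ℕ) (hn : 0 < n) :
    muNK n j ≤ (1 / 2) * log ((n - j + 1 : ℕ) / n) := by
  rw [muNK, chiSqMeasure, integral_const_mul]
  gcongr
  refine (integral_log_div_gammaMeasure_le (by positivity) (by norm_num)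
    (by positivity)).trans_eq ?_
  congr 2
  ring

lemma Real.log_sub_div_le_log_div_sub {q t c : ℝ} (hq : 0 < q) (ht : t < q) (hc : 0 < c) :
    log ((q - t) / c) ≤ log (q / c) - t / q := by
  have hqt : 0 < q - t := by linarith
  have h := log_le_sub_one_of_pos (div_pos hqt hq)
  rw [log_div hqt.ne' hq.ne'] at h
  rw [log_div hqt.ne' hc.ne', log_div hq.ne' hc.ne']
  have : (q - t) / q - 1 = -(t / q) := by field_simp; ring
  linarith

lemma Finset.sum_range_natCast_id (m : ℕ) :
    ∑ i ∈ Finset.range m, (i : ℝ) = m * (m - 1) / 2 := by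
  induction m with
  | zero => simp
  | succ m ih => rw [Finset.sum_range_succ, ih]; push_cast; ring

lemma sum_range_log_sub_div_le {m q : ℕ} (hmq : m ≤ q) {c : ℝ} (hc : 0 < c) :
    ∑ i ∈ Finset.range m, log ((q - i : ℝ) / c) ≤ m * log (q / c) - m * (m - 1) / (2 * q) := by
  rcases Nat.eq_zero_or_pos m with rfl | hm
  · simp
  have hq : (0 : ℝ) < q := by exact_mod_cast hm.trans_le hmq
  calc ∑ i ∈ Finset.range m, log ((q - i : ℝ) / c)
      ≤ ∑ i ∈ Finset.range m, (log (q / c) - i / q) := by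
        refine Finset.sum_le_sum fun i hi => log_sub_div_le_log_div_sub hq ?_ hc
        exact_mod_cast (Finset.mem_range.1 hi).trans_le hmq
    _ = m * log (q / c) - m * (m - 1) / (2 * q) := by
        rw [Finset.sum_sub_distrib, ← Finset.sum_div, Finset.sum_range_natCast_id]
        simp only [Finset.sum_const, Finset.card_range, nsmul_eq_mul]
        field_simp

lemma sum_Icc_muNK_le {n q m : ℕ} (hmq : m ≤ q) (hqn : q ≤ n) :
    ∑ j ∈ Finset.Icc (n - q + 1) (n - q + m), muNK n j
      ≤ (1 / 2) * ∑ i ∈ Finset.range m, log ((q - i : ℝ) / n) := by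
  rw [← Finset.Ico_add_one_right_eq_Icc, Finset.sum_Ico_eq_sum_range,
    show n - q + m + 1 - (n - q + 1) = m by omega, Finset.mul_sum]
  refine Finset.sum_le_sum fun i hi => ?_
  have hi : i < m := Finset.mem_range.1 hi
  refine (muNK_le n _ (by omega)).trans_eq ?_
  rw [show n - (n - q + 1 + i) + 1 = q - i by omega, Nat.cast_sub (by omega : i ≤ q)]

/-- Lower digamma-sum bound:
`(m/2n) log(q/n) − (1/n) Σ_{j=n−q+1}^{n−q+m} μ_{n,j} ≥ (m−1)²/(4nq)` for `4 ≤ m ≤ q ≤ n`. -/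
theorem digamma_sum_lower_bound
    (n q m : ℕ) (hm : 4 ≤ m) (hmq : m ≤ q) (hqn : q ≤ n) :
    ((m : ℝ) - 1) ^ 2 / (4 * n * q)
      ≤ (m : ℝ) / (2 * n) * Real.log ((q : ℝ) / n)
        - (n : ℝ)⁻¹ * ∑ j ∈ Finset.Icc (n - q + 1) (n - q + m), muNK n j := by
  have hn : (0 : ℝ) < n := by exact_mod_cast (by omega : 0 < n)
  have hsum : ∑ j ∈ Finset.Icc (n - q + 1) (n - q + m), muNK n j
      ≤ (1 / 2) * (m * log (q / n) - m * (m - 1) / (2 * q)) :=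
    (sum_Icc_muNK_le hmq hqn).trans (by gcongr; exact sum_range_log_sub_div_le hmq hn)
  have hm1 : (1 : ℝ) ≤ m := by exact_mod_cast (by omega : 1 ≤ m)
  calc ((m : ℝ) - 1) ^ 2 / (4 * n * q) ≤ m * (m - 1) / (4 * n * q) := by gcongr; linarith
    _ = m / (2 * n) * log (q / n)
          - (n : ℝ)⁻¹ * ((1 / 2) * (m * log (q / n) - m * (m - 1) / (2 * q))) := by
        field_simp; ring
    _ ≤ _ := by gcongr
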